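/- For every n ≥ 0 and all z, w ∈ ℂ with z ≠ w, the Poisson bracket {B_n(z), B_n^*(w)} = (i·z/(z−w))·(A_n(z)·A_n^*(w) − A_n(w)·A_n^*(z)). -/

import Mathlib

open Complex

/-- Derivative of `f` in the direction of the real part of the `k`-th variable α_k. -/
noncomputable def duDeriv (k : ℕ) (f : (ℕ → ℂ) → ℂ) (a : ℕ → ℂ) : ℂ :=
  deriv (fun t : ℝ => f (Function.update a k (a k + (t : ℂ)))) 0

/-- Derivative of `f` in the direction of the imaginary part of the `k`-th variable α_k. -/
noncomputable def dvDeriv (k : ℕ) (f : (ℕ → ℂ) → ℂ) (a : ℕ → ℂ) : ℂ :=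
  deriv (fun t : ℝ => f (Function.update a k (a k + (t : ℂ) * Complex.I))) 0

/-- Wirtinger derivative ∂f/∂α_k = (1/2)(∂/∂u_k − i·∂/∂v_k). -/
noncomputable def dAlpha (k : ℕ) (f : (ℕ → ℂ) → ℂ) (a : ℕ → ℂ) : ℂ :=
  (1 / 2) * (duDeriv k f a - Complex.I * dvDeriv k f a)

/-- Wirtinger derivative ∂f/∂conj(α_k) = (1/2)(∂/∂u_k + i·∂/∂v_k). -/
noncomputable def dAlphaBar (k : ℕ) (f : (ℕ → ℂ) → ℂ) (a : ℕ → ℂ) : ℂ :=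
  (1 / 2) * (duDeriv k f a + Complex.I * dvDeriv k f a)

/-- The Poisson bracket
{f,g} = i·Σ_k (1 − |α_k|²)·[(∂f/∂conj(α_k))·(∂g/∂α_k) − (∂f/∂α_k)·(∂g/∂conj(α_k))]. -/
noncomputable def pb (f g : (ℕ → ℂ) → ℂ) (a : ℕ → ℂ) : ℂ :=
  Complex.I * ∑' k : ℕ, (1 - (Complex.normSq (a k) : ℂ)) *
    (dAlphaBar k f a * dAlpha k g a - dAlpha k f a * dAlphaBar k g a)

/-- The quadruple ((A_n(z), B_n(z)), (A_n^*(z), B_n^*(z))) of Wall polynomials: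
A_0(z) = α_0, B_0(z) = 1, A_0^*(z) = conj(α_0), B_0^*(z) = 1,
A_{n+1}(z) = A_n(z) + α_{n+1}·z·B_n^*(z), B_{n+1}(z) = B_n(z) + α_{n+1}·z·A_n^*(z),
A_{n+1}^*(z) = z·A_n^*(z) + conj(α_{n+1})·B_n(z),
B_{n+1}^*(z) = z·B_n^*(z) + conj(α_{n+1})·A_n(z). -/
noncomputable def WallP : ℕ → ℂ → (ℕ → ℂ) → (ℂ × ℂ) × ℂ × ℂ
  | 0, _, a => ((a 0, 1), (starRingEnd ℂ) (a 0), 1)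
  | n + 1, z, a =>
      (((WallP n z a).1.1 + a (n + 1) * z * (WallP n z a).2.2,
        (WallP n z a).1.2 + a (n + 1) * z * (WallP n z a).2.1),
       z * (WallP n z a).2.1 + (starRingEnd ℂ) (a (n + 1)) * (WallP n z a).1.2,
       z * (WallP n z a).2.2 + (starRingEnd ℂ) (a (n + 1)) * (WallP n z a).1.1)

/-- The Wall polynomial A_n(z). -/
noncomputable def WallA (n : ℕ) (z : ℂ) (a : ℕ → ℂ) : ℂ := (WallP n z a).1.1

/-- The Wall polynomial B_n(z). -/
noncomputable def WallB (n : ℕ) (z : ℂ) (a : ℕ → ℂ) : ℂ := (WallP n z a).1.2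

/-- The reversed Wall polynomial A_n^*(z). -/
noncomputable def WallAStar (n : ℕ) (z : ℂ) (a : ℕ → ℂ) : ℂ := (WallP n z a).2.1

/-- The reversed Wall polynomial B_n^*(z). -/
noncomputable def WallBStar (n : ℕ) (z : ℂ) (a : ℕ → ℂ) : ℂ := (WallP n z a).2.2

/-! ### Auxiliary machinery -/

/-- Wirtinger derivative ∂/∂α_k of the Wall quadruple. -/
noncomputable def Wd (k : ℕ) : ℕ → ℂ → (ℕ → ℂ) → (ℂ × ℂ) × ℂ × ℂ
  | 0, _, _ => if k = 0 then ((1, 0), 0, 0) else ((0, 0), 0, 0)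
  | n + 1, z, a =>
      if k = n + 1 then ((z * (WallP n z a).2.2, z * (WallP n z a).2.1), 0, 0)
      else
        (((Wd k n z a).1.1 + a (n + 1) * z * (Wd k n z a).2.2,
          (Wd k n z a).1.2 + a (n + 1) * z * (Wd k n z a).2.1),
         z * (Wd k n z a).2.1 + (starRingEnd ℂ) (a (n + 1)) * (Wd k n z a).1.2,
         z * (Wd k n z a).2.2 + (starRingEnd ℂ) (a (n + 1)) * (Wd k n z a).1.1)

/-- Wirtinger derivative ∂/∂conj(α_k) of the Wall quadruple. -/
noncomputable def Wdb (k : ℕ) : ℕ → ℂ → (ℕ → ℂ) → (ℂ × ℂ) × ℂ × ℂ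
  | 0, _, _ => if k = 0 then ((0, 0), 1, 0) else ((0, 0), 0, 0)
  | n + 1, z, a =>
      if k = n + 1 then ((0, 0), (WallP n z a).1.2, (WallP n z a).1.1)
      else
        (((Wdb k n z a).1.1 + a (n + 1) * z * (Wdb k n z a).2.2,
          (Wdb k n z a).1.2 + a (n + 1) * z * (Wdb k n z a).2.1),
         z * (Wdb k n z a).2.1 + (starRingEnd ℂ) (a (n + 1)) * (Wdb k n z a).1.2,
         z * (Wdb k n z a).2.2 + (starRingEnd ℂ) (a (n + 1)) * (Wdb k n z a).1.1)

lemma WallP_congr (z : ℂ) : ∀ (n : ℕ) (a b : ℕ → ℂ), (∀ j, j ≤ n → a j = b j) →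
    WallP n z a = WallP n z b := by
  intro n
  induction n with
  | zero => intro a b h; simp [WallP, h 0 le_rfl]
  | succ n ih =>
    intro a b h
    have h1 : WallP n z a = WallP n z b := ih a b fun j hj => h j (hj.trans (Nat.le_succ n))
    simp [WallP, h1, h (n+1) le_rfl]

lemma wall_affine (z : ℂ) (a : ℕ → ℂ) : ∀ (n k : ℕ), k ≤ n → ∀ x : ℂ,
    ((WallP n z (Function.update a k x)).1.1 =
      (WallP n z (Function.update a k 0)).1.1 + x * (Wd k n z a).1.1
        + (starRingEnd ℂ) x * (Wdb k n z a).1.1) ∧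
    ((WallP n z (Function.update a k x)).1.2 =
      (WallP n z (Function.update a k 0)).1.2 + x * (Wd k n z a).1.2
        + (starRingEnd ℂ) x * (Wdb k n z a).1.2) ∧
    ((WallP n z (Function.update a k x)).2.1 =
      (WallP n z (Function.update a k 0)).2.1 + x * (Wd k n z a).2.1
        + (starRingEnd ℂ) x * (Wdb k n z a).2.1) ∧
    ((WallP n z (Function.update a k x)).2.2 =
      (WallP n z (Function.update a k 0)).2.2 + x * (Wd k n z a).2.2
        + (starRingEnd ℂ) x * (Wdb k n z a).2.2) := by
  intro n
  induction n with
  | zero =>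
    intro k hk x
    interval_cases k
    simp [WallP, Wd, Wdb]
  | succ n ih =>
    intro k hk x
    rcases Nat.lt_or_ge k (n+1) with hk' | hk'
    · have hkn : k ≤ n := Nat.lt_succ_iff.mp hk'
      have hne : k ≠ n + 1 := by omega
      have hup : ∀ y : ℂ, Function.update a k y (n+1) = a (n+1) :=
        fun y => Function.update_of_ne (by omega) _ _
      obtain ⟨e1, e2, e3, e4⟩ := ih k hkn x
      refine ⟨?_, ?_, ?_, ?_⟩ <;>
      · simp only [WallP, Wd, Wdb, if_neg hne, hup, e1, e2, e3, e4]
        ring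
    · have hke : k = n + 1 := le_antisymm hk hk'
      subst hke
      have hP : ∀ y : ℂ, WallP n z (Function.update a (n+1) y) = WallP n z a :=
        fun y => WallP_congr z n _ _ fun j hj => Function.update_of_ne (by omega) _ _
      refine ⟨?_, ?_, ?_, ?_⟩ <;>
      · simp only [WallP, Wd, Wdb, hP, Function.update_self, map_zero, if_pos,
          eq_self_iff_true, if_true]
        ring

lemma deriv_linear (c d : ℂ) : deriv (fun t : ℝ => c + (t : ℂ) * d) 0 = d := by
  have h1 : HasDerivAt (fun t : ℝ => (t : ℂ)) 1 0 := by
    simpa using (hasDerivAt_id (0:ℝ)).ofReal_comp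
  have h : HasDerivAt (fun t : ℝ => c + (t : ℂ) * d) d 0 := by
    simpa using (h1.mul_const d).const_add c
  exact h.deriv

lemma dAlpha_of_affine (k : ℕ) (f : (ℕ → ℂ) → ℂ) (a : ℕ → ℂ) (c0 c1 c2 : ℂ)
    (h : ∀ x : ℂ, f (Function.update a k x) = c0 + x * c1 + (starRingEnd ℂ) x * c2) :
    dAlpha k f a = c1 ∧ dAlphaBar k f a = c2 := by
  have hu : duDeriv k f a = c1 + c2 := by
    unfold duDeriv
    have : (fun t : ℝ => f (Function.update a k (a k + (t : ℂ)))) =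
        fun t : ℝ => (c0 + a k * c1 + (starRingEnd ℂ) (a k) * c2) + (t : ℂ) * (c1 + c2) := by
      funext t
      rw [h]
      simp only [map_add, Complex.conj_ofReal]
      ring
    rw [this, deriv_linear]
  have hv : dvDeriv k f a = Complex.I * c1 - Complex.I * c2 := by
    unfold dvDeriv
    have : (fun t : ℝ => f (Function.update a k (a k + (t : ℂ) * Complex.I))) =
        fun t : ℝ => (c0 + a k * c1 + (starRingEnd ℂ) (a k) * c2)
          + (t : ℂ) * (Complex.I * c1 - Complex.I * c2) := by
      funext t
      rw [h]
      simp only [map_add, map_mul, Complex.conj_ofReal, Complex.conj_I]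
      ring
    rw [this, deriv_linear]
  constructor
  · unfold dAlpha
    rw [hu, hv]
    linear_combination (-(c1 - c2) / 2) * Complex.I_mul_I
  · unfold dAlphaBar
    rw [hu, hv]
    linear_combination ((c1 - c2) / 2) * Complex.I_mul_I

/-- The bracket sum for the pair (B(z), B*(w)). -/
noncomputable def S1 (n : ℕ) (z w : ℂ) (a : ℕ → ℂ) : ℂ :=
  ∑ k ∈ Finset.range (n+1), (1 - (Complex.normSq (a k) : ℂ)) *
    ((Wdb k n z a).1.2 * (Wd k n w a).2.2 - (Wd k n z a).1.2 * (Wdb k n w a).2.2)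

/-- The bracket sum for the pair (B(z), A(w)). -/
noncomputable def S2 (n : ℕ) (z w : ℂ) (a : ℕ → ℂ) : ℂ :=
  ∑ k ∈ Finset.range (n+1), (1 - (Complex.normSq (a k) : ℂ)) *
    ((Wdb k n z a).1.2 * (Wd k n w a).1.1 - (Wd k n z a).1.2 * (Wdb k n w a).1.1)

/-- The bracket sum for the pair (A*(z), B*(w)). -/
noncomputable def S3 (n : ℕ) (z w : ℂ) (a : ℕ → ℂ) : ℂ :=
  ∑ k ∈ Finset.range (n+1), (1 - (Complex.normSq (a k) : ℂ)) *
    ((Wdb k n z a).2.1 * (Wd k n w a).2.2 - (Wd k n z a).2.1 * (Wdb k n w a).2.2)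

/-- The bracket sum for the pair (A*(z), A(w)). -/
noncomputable def S4 (n : ℕ) (z w : ℂ) (a : ℕ → ℂ) : ℂ :=
  ∑ k ∈ Finset.range (n+1), (1 - (Complex.normSq (a k) : ℂ)) *
    ((Wdb k n z a).2.1 * (Wd k n w a).1.1 - (Wd k n z a).2.1 * (Wdb k n w a).1.1)

lemma master (z w : ℂ) (a : ℕ → ℂ) : ∀ n : ℕ,
    ((z - w) * S1 n z w a =
      z * ((WallP n z a).1.1 * (WallP n w a).2.1 - (WallP n z a).2.1 * (WallP n w a).1.1)) ∧
    ((z - w) * S2 n z w a =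
      z * ((WallP n z a).1.1 * (WallP n w a).1.2 - (WallP n z a).1.2 * (WallP n w a).1.1)) ∧
    ((z - w) * S3 n z w a =
      z * ((WallP n z a).2.2 * (WallP n w a).2.1 - (WallP n z a).2.1 * (WallP n w a).2.2)) ∧
    ((z - w) * S4 n z w a =
      (w - z) * (WallP n z a).2.1 * (WallP n w a).1.1
        + z * (WallP n z a).2.2 * (WallP n w a).1.2
        - w * (WallP n z a).1.2 * (WallP n w a).2.2) := by
  intro n
  induction n with
  | zero =>
    refine ⟨?_, ?_, ?_, ?_⟩ <;>
    · simp only [S1, S2, S3, S4, WallP, Wd, Wdb, Finset.sum_range_succ,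
        Finset.sum_range_zero, if_pos, eq_self_iff_true, if_true]
      rw [← Complex.mul_conj]
      ring
  | succ n ih =>
    obtain ⟨h1, h2, h3, h4⟩ := ih
    have hlast : ∀ k : ℕ, k ∈ Finset.range (n+1) → k ≠ n + 1 := by
      intro k hk
      have := Finset.mem_range.mp hk
      omega
    have e1 : S1 (n+1) z w a = w * S1 n z w a + (starRingEnd ℂ) (a (n+1)) * S2 n z w a + a (n+1) * z * w * S3 n z w a + a (n+1) * z * (starRingEnd ℂ) (a (n+1)) * S4 n z w a
          - (1 - (Complex.normSq (a (n+1)) : ℂ)) * (z * (WallP n z a).2.1 * (WallP n w a).1.1) := by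
      have hc : ∀ k ∈ Finset.range (n+1), (1 - (Complex.normSq (a k) : ℂ)) * ((Wdb k (n+1) z a).1.2 * (Wd k (n+1) w a).2.2 - (Wd k (n+1) z a).1.2 * (Wdb k (n+1) w a).2.2) =
          w * ((1 - (Complex.normSq (a k) : ℂ)) * ((Wdb k n z a).1.2 * (Wd k n w a).2.2 - (Wd k n z a).1.2 * (Wdb k n w a).2.2)) + (starRingEnd ℂ) (a (n+1)) * ((1 - (Complex.normSq (a k) : ℂ)) * ((Wdb k n z a).1.2 * (Wd k n w a).1.1 - (Wd k n z a).1.2 * (Wdb k n w a).1.1)) + a (n+1) * z * w * ((1 - (Complex.normSq (a k) : ℂ)) * ((Wdb k n z a).2.1 * (Wd k n w a).2.2 - (Wd k n z a).2.1 * (Wdb k n w a).2.2)) + a (n+1) * z * (starRingEnd ℂ) (a (n+1)) * ((1 - (Complex.normSq (a k) : ℂ)) * ((Wdb k n z a).2.1 * (Wd k n w a).1.1 - (Wd k n z a).2.1 * (Wdb k n w a).1.1)) := by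
        intro k hk
        simp only [Wd, Wdb, if_neg (hlast k hk)]
        ring
      unfold S1 S2 S3 S4
      rw [Finset.sum_range_succ, Finset.sum_congr rfl hc]
      simp only [Finset.sum_add_distrib, ← Finset.mul_sum]
      simp only [Wd, Wdb, if_pos, eq_self_iff_true, if_true]
      ring
    have e2 : S2 (n+1) z w a = 1 * S2 n z w a + a (n+1) * w * S1 n z w a + a (n+1) * z * S4 n z w a + a (n+1) * a (n+1) * z * w * S3 n z w a := by
      have hc : ∀ k ∈ Finset.range (n+1), (1 - (Complex.normSq (a k) : ℂ)) * ((Wdb k (n+1) z a).1.2 * (Wd k (n+1) w a).1.1 - (Wd k (n+1) z a).1.2 * (Wdb k (n+1) w a).1.1) =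
          1 * ((1 - (Complex.normSq (a k) : ℂ)) * ((Wdb k n z a).1.2 * (Wd k n w a).1.1 - (Wd k n z a).1.2 * (Wdb k n w a).1.1)) + a (n+1) * w * ((1 - (Complex.normSq (a k) : ℂ)) * ((Wdb k n z a).1.2 * (Wd k n w a).2.2 - (Wd k n z a).1.2 * (Wdb k n w a).2.2)) + a (n+1) * z * ((1 - (Complex.normSq (a k) : ℂ)) * ((Wdb k n z a).2.1 * (Wd k n w a).1.1 - (Wd k n z a).2.1 * (Wdb k n w a).1.1)) + a (n+1) * a (n+1) * z * w * ((1 - (Complex.normSq (a k) : ℂ)) * ((Wdb k n z a).2.1 * (Wd k n w a).2.2 - (Wd k n z a).2.1 * (Wdb k n w a).2.2)) := by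
        intro k hk
        simp only [Wd, Wdb, if_neg (hlast k hk)]
        ring
      unfold S1 S2 S3 S4
      rw [Finset.sum_range_succ, Finset.sum_congr rfl hc]
      simp only [Finset.sum_add_distrib, ← Finset.mul_sum]
      simp only [Wd, Wdb, if_pos, eq_self_iff_true, if_true]
      ring
    have e3 : S3 (n+1) z w a = z * w * S3 n z w a + z * (starRingEnd ℂ) (a (n+1)) * S4 n z w a + (starRingEnd ℂ) (a (n+1)) * w * S1 n z w a + (starRingEnd ℂ) (a (n+1)) * (starRingEnd ℂ) (a (n+1)) * S2 n z w a := by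
      have hc : ∀ k ∈ Finset.range (n+1), (1 - (Complex.normSq (a k) : ℂ)) * ((Wdb k (n+1) z a).2.1 * (Wd k (n+1) w a).2.2 - (Wd k (n+1) z a).2.1 * (Wdb k (n+1) w a).2.2) =
          z * w * ((1 - (Complex.normSq (a k) : ℂ)) * ((Wdb k n z a).2.1 * (Wd k n w a).2.2 - (Wd k n z a).2.1 * (Wdb k n w a).2.2)) + z * (starRingEnd ℂ) (a (n+1)) * ((1 - (Complex.normSq (a k) : ℂ)) * ((Wdb k n z a).2.1 * (Wd k n w a).1.1 - (Wd k n z a).2.1 * (Wdb k n w a).1.1)) + (starRingEnd ℂ) (a (n+1)) * w * ((1 - (Complex.normSq (a k) : ℂ)) * ((Wdb k n z a).1.2 * (Wd k n w a).2.2 - (Wd k n z a).1.2 * (Wdb k n w a).2.2)) + (starRingEnd ℂ) (a (n+1)) * (starRingEnd ℂ) (a (n+1)) * ((1 - (Complex.normSq (a k) : ℂ)) * ((Wdb k n z a).1.2 * (Wd k n w a).1.1 - (Wd k n z a).1.2 * (Wdb k n w a).1.1)) := by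
        intro k hk
        simp only [Wd, Wdb, if_neg (hlast k hk)]
        ring
      unfold S1 S2 S3 S4
      rw [Finset.sum_range_succ, Finset.sum_congr rfl hc]
      simp only [Finset.sum_add_distrib, ← Finset.mul_sum]
      simp only [Wd, Wdb, if_pos, eq_self_iff_true, if_true]
      ring
    have e4 : S4 (n+1) z w a = z * S4 n z w a + z * a (n+1) * w * S3 n z w a + (starRingEnd ℂ) (a (n+1)) * S2 n z w a + (starRingEnd ℂ) (a (n+1)) * a (n+1) * w * S1 n z w a
          + (1 - (Complex.normSq (a (n+1)) : ℂ)) * (w * (WallP n z a).1.2 * (WallP n w a).2.2) := by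
      have hc : ∀ k ∈ Finset.range (n+1), (1 - (Complex.normSq (a k) : ℂ)) * ((Wdb k (n+1) z a).2.1 * (Wd k (n+1) w a).1.1 - (Wd k (n+1) z a).2.1 * (Wdb k (n+1) w a).1.1) =
          z * ((1 - (Complex.normSq (a k) : ℂ)) * ((Wdb k n z a).2.1 * (Wd k n w a).1.1 - (Wd k n z a).2.1 * (Wdb k n w a).1.1)) + z * a (n+1) * w * ((1 - (Complex.normSq (a k) : ℂ)) * ((Wdb k n z a).2.1 * (Wd k n w a).2.2 - (Wd k n z a).2.1 * (Wdb k n w a).2.2)) + (starRingEnd ℂ) (a (n+1)) * ((1 - (Complex.normSq (a k) : ℂ)) * ((Wdb k n z a).1.2 * (Wd k n w a).1.1 - (Wd k n z a).1.2 * (Wdb k n w a).1.1)) + (starRingEnd ℂ) (a (n+1)) * a (n+1) * w * ((1 - (Complex.normSq (a k) : ℂ)) * ((Wdb k n z a).1.2 * (Wd k n w a).2.2 - (Wd k n z a).1.2 * (Wdb k n w a).2.2)) := by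
        intro k hk
        simp only [Wd, Wdb, if_neg (hlast k hk)]
        ring
      unfold S1 S2 S3 S4
      rw [Finset.sum_range_succ, Finset.sum_congr rfl hc]
      simp only [Finset.sum_add_distrib, ← Finset.mul_sum]
      simp only [Wd, Wdb, if_pos, eq_self_iff_true, if_true]
      ring
    refine ⟨?_, ?_, ?_, ?_⟩
    · rw [e1]
      simp only [WallP]
      rw [← Complex.mul_conj]
      linear_combination w * h1 + (starRingEnd ℂ) (a (n+1)) * h2 + a (n+1) * z * w * h3
        + a (n+1) * z * (starRingEnd ℂ) (a (n+1)) * h4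
    · rw [e2]
      simp only [WallP]
      linear_combination h2 + a (n+1) * w * h1 + a (n+1) * z * h4
        + a (n+1) * a (n+1) * z * w * h3
    · rw [e3]
      simp only [WallP]
      linear_combination z * w * h3 + z * (starRingEnd ℂ) (a (n+1)) * h4 + (starRingEnd ℂ) (a (n+1)) * w * h1
        + (starRingEnd ℂ) (a (n+1)) * (starRingEnd ℂ) (a (n+1)) * h2
    · rw [e4]
      simp only [WallP]
      rw [← Complex.mul_conj]
      linear_combination z * h4 + z * a (n+1) * w * h3 + (starRingEnd ℂ) (a (n+1)) * h2
        + (starRingEnd ℂ) (a (n+1)) * a (n+1) * w * h1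

theorem poisson_B_BStar (n : ℕ) (z w : ℂ) (hzw : z ≠ w) (a : ℕ → ℂ) (ha : ∀ k, ‖a k‖ < 1) :
    pb (WallB n z) (WallBStar n w) a =
      Complex.I * z / (z - w) * (WallA n z a * WallAStar n w a - WallA n w a * WallAStar n z a) := by
  have hzero : ∀ k : ℕ, k ∉ Finset.range (n+1) →
      (1 - (Complex.normSq (a k) : ℂ)) *
        (dAlphaBar k (WallB n z) a * dAlpha k (WallBStar n w) a
          - dAlpha k (WallB n z) a * dAlphaBar k (WallBStar n w) a) = 0 := by
    intro k hk
    have hk' : n < k := by simpa using hk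
    have hf : ∀ x : ℂ, WallB n z (Function.update a k x) =
        WallB n z a + x * 0 + (starRingEnd ℂ) x * 0 := by
      intro x
      have : WallP n z (Function.update a k x) = WallP n z a :=
        WallP_congr z n _ _ fun j hj => Function.update_of_ne (by omega) _ _
      unfold WallB
      rw [this]
      ring
    have hg : ∀ x : ℂ, WallBStar n w (Function.update a k x) =
        WallBStar n w a + x * 0 + (starRingEnd ℂ) x * 0 := by
      intro x
      have : WallP n w (Function.update a k x) = WallP n w a :=
        WallP_congr w n _ _ fun j hj => Function.update_of_ne (by omega) _ _
      unfold WallBStar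
      rw [this]
      ring
    obtain ⟨d1, d2⟩ := dAlpha_of_affine k (WallB n z) a _ 0 0 hf
    obtain ⟨d3, d4⟩ := dAlpha_of_affine k (WallBStar n w) a _ 0 0 hg
    rw [d1, d2, d3, d4]
    ring
  have hsum : ∀ k ∈ Finset.range (n+1),
      (1 - (Complex.normSq (a k) : ℂ)) *
        (dAlphaBar k (WallB n z) a * dAlpha k (WallBStar n w) a
          - dAlpha k (WallB n z) a * dAlphaBar k (WallBStar n w) a) =
      (1 - (Complex.normSq (a k) : ℂ)) *
        ((Wdb k n z a).1.2 * (Wd k n w a).2.2 - (Wd k n z a).1.2 * (Wdb k n w a).2.2) := by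
    intro k hk
    have hk' : k ≤ n := by
      have := Finset.mem_range.mp hk
      omega
    obtain ⟨d1, d2⟩ := dAlpha_of_affine k (WallB n z) a _ _ _
      (fun x => (wall_affine z a n k hk' x).2.1)
    obtain ⟨d3, d4⟩ := dAlpha_of_affine k (WallBStar n w) a _ _ _
      (fun x => (wall_affine w a n k hk' x).2.2.2)
    rw [d1, d2, d3, d4]
  obtain ⟨h1, _, _, _⟩ := master z w a n
  have hzw' : z - w ≠ 0 := sub_ne_zero.mpr hzw
  unfold pb
  rw [tsum_eq_sum hzero, Finset.sum_congr rfl hsum]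
  have hS : (∑ k ∈ Finset.range (n+1), (1 - (Complex.normSq (a k) : ℂ)) *
      ((Wdb k n z a).1.2 * (Wd k n w a).2.2 - (Wd k n z a).1.2 * (Wdb k n w a).2.2))
      = S1 n z w a := rfl
  rw [hS]
  unfold WallA WallAStar
  rw [div_mul_eq_mul_div, eq_div_iff hzw']
  linear_combination Complex.I * h1
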